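/- Assume σ ≥ 0 and 2σ+1 < δ_u < 3. If Σ_{q≥−1} λ_q^{−1+δ_u} a_q² < ∞, then the set of natural numbers q such that (L λ_{p−q})^σ λ_q^{−1} a_p < c ν for all integers p > q and λ_q^{−2} G_q < c ν is nonempty; that is, Λ_u < ∞. -/

import Mathlib

open scoped ENNReal

/-- The admissibility condition at level `q` in the definition of the abstract velocity
determining wavenumber (`λ_q = 2^q`): `(L λ_{p-q})^σ λ_q^{-1} a_p < c ν` for every
integer `p > q`, and `λ_q^{-2} G_q < c ν`. -/
def GoodU (L c ν σ : ℝ) (a G : ℤ → ℝ) (q : ℕ) : Prop :=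
  (∀ p : ℤ, (q : ℤ) < p →
      (L * (2:ℝ) ^ (p - (q : ℤ))) ^ σ * ((2:ℝ) ^ (q : ℤ))⁻¹ * a p < c * ν) ∧
    (((2:ℝ) ^ (q : ℤ)) ^ 2)⁻¹ * G q < c * ν

/-- The abstract velocity determining wavenumber `Λ_u = λ_Q = 2^Q`, where `Q` is the
least admissible natural number; `Λ_u = ∞` if no natural number is admissible. -/
noncomputable def LambdaU (L c ν σ : ℝ) (a G : ℤ → ℝ) : ℝ≥0∞ :=
  sInf {x : ℝ≥0∞ | ∃ q : ℕ, GoodU L c ν σ a G q ∧ x = 2 ^ q}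

/-!
Every term of the convergent series is bounded, so `a_p ≤ M λ_p^{-β}` for `p ≥ -1`, where
`β = (δ_u - 1)/2 > σ ≥ 0`; in particular `a_p ≤ M 2^β`. For `p > q` the factor `λ_{p-q}^σ` is
absorbed by `λ_p^{-β}`, which leaves `L^σ M λ_q^{-1}`. The Bernstein bound and the geometric sum
`Σ_{-1 ≤ p ≤ q} λ_p < 2 λ_q` give `λ_q^{-2} G_q ≤ 2 C_B M 2^β λ_q^{-1}`. Both conditions therefore
hold as soon as `λ_q` is large enough.
-/

open Finset

lemma le_sqrt_mul_rpow_neg_half {x y s K : ℝ} (hx : 0 < x) (hy : 0 ≤ y)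
    (h : x ^ s * y ^ 2 ≤ K) : y ≤ √K * x ^ (-(s / 2)) := by
  have hK : 0 ≤ K := le_trans (by positivity) h
  rw [← pow_le_pow_iff_left₀ hy (by positivity) two_ne_zero, mul_pow, Real.sq_sqrt hK,
    ← Real.rpow_natCast (x ^ _), ← Real.rpow_mul hx.le, Nat.cast_ofNat,
    show -(s / 2) * 2 = -s by ring, Real.rpow_neg hx.le, ← div_eq_mul_inv,
    le_div_iff₀ (by positivity), mul_comm]
  exact h

lemma sub_one_mul_sum_Icc_zpow {x : ℝ} (hx : x ≠ 0) {m n : ℤ} (h : m ≤ n + 1) :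
    (x - 1) * ∑ p ∈ Icc m n, x ^ p = x ^ (n + 1) - x ^ m := by
  induction n, (by omega : m - 1 ≤ n) using Int.leInduction with
  | base => simp
  | succ n hmn ih =>
    rw [← insert_Icc_right_eq_Icc_add_one (by omega), sum_insert (by simp), mul_add,
      ih (by omega), zpow_add_one₀ hx (n + 1)]
    ring

lemma sum_Icc_two_zpow_le (m n : ℤ) : ∑ p ∈ Icc m n, (2 : ℝ) ^ p ≤ 2 ^ (n + 1) := by
  rcases le_or_gt m (n + 1) with h | h
  · calc ∑ p ∈ Icc m n, (2 : ℝ) ^ p = (2 - 1) * ∑ p ∈ Icc m n, (2 : ℝ) ^ p := by norm_num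
      _ = 2 ^ (n + 1) - 2 ^ m := sub_one_mul_sum_Icc_zpow two_ne_zero h
      _ ≤ 2 ^ (n + 1) := sub_le_self _ (by positivity)
  · rw [Icc_eq_empty (by omega), sum_empty]
    positivity

lemma exists_le_mul_two_zpow_rpow_of_tsum_ne_top {s : ℝ} {a : ℤ → ℝ}
    (ha : ∀ p : ℤ, -1 ≤ p → 0 ≤ a p)
    (hS : (∑' n : ℕ, ENNReal.ofReal (((2 : ℝ) ^ ((n : ℤ) - 1)) ^ s * a ((n : ℤ) - 1) ^ 2)) ≠ ⊤) :
    ∃ M, 0 ≤ M ∧ ∀ p : ℤ, -1 ≤ p → a p ≤ M * ((2 : ℝ) ^ p) ^ (-(s / 2)) := by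
  obtain ⟨K, hK⟩ : ∃ K, ∀ n : ℕ, ((2 : ℝ) ^ ((n : ℤ) - 1)) ^ s * a ((n : ℤ) - 1) ^ 2 ≤ K :=
    ⟨_, fun n => (ENNReal.ofReal_le_iff_le_toReal hS).1 (ENNReal.le_tsum n)⟩
  refine ⟨√K, Real.sqrt_nonneg K, fun p hp =>
    le_sqrt_mul_rpow_neg_half (by positivity) (ha p hp) ?_⟩
  have := hK (p + 1).toNat
  rwa [show ((p + 1).toNat : ℤ) - 1 = p by omega] at this

lemma mul_rpow_mul_inv_mul_le {L μ l σ β M y : ℝ} (hL : 0 ≤ L) (hμ : 1 ≤ μ) (hl : 1 ≤ l)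
    (hσβ : σ ≤ β) (hβ : 0 ≤ β) (hM : 0 ≤ M) (hy : y ≤ M * (μ * l) ^ (-β)) :
    (L * μ) ^ σ * l⁻¹ * y ≤ L ^ σ * M * l⁻¹ := by
  have hμ0 : 0 < μ := zero_lt_one.trans_le hμ
  have hl0 : 0 < l := zero_lt_one.trans_le hl
  have hμβ : μ ^ σ * μ ^ (-β) ≤ 1 := by
    rw [← Real.rpow_add hμ0]
    exact Real.rpow_le_one_of_one_le_of_nonpos hμ (by linarith)
  have hlβ : l ^ (-β) ≤ 1 := Real.rpow_le_one_of_one_le_of_nonpos hl (by linarith)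
  calc (L * μ) ^ σ * l⁻¹ * y ≤ (L * μ) ^ σ * l⁻¹ * (M * (μ * l) ^ (-β)) := by gcongr
    _ = L ^ σ * M * l⁻¹ * ((μ ^ σ * μ ^ (-β)) * l ^ (-β)) := by
      rw [Real.mul_rpow hL hμ0.le, Real.mul_rpow hμ0.le hl0.le]
      ring
    _ ≤ L ^ σ * M * l⁻¹ := by
      refine mul_le_of_le_one_right (by positivity) ?_
      exact mul_le_one₀ hμβ (by positivity) hlβ

lemma inv_sq_mul_le_of_le_sum {CB A Gq : ℝ} {a : ℤ → ℝ} {q : ℤ} (hCB : 0 ≤ CB) (hA : 0 ≤ A)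
    (ha : ∀ p ∈ Icc (-1) q, a p ≤ A) (hG : Gq ≤ CB * ∑ p ∈ Icc (-1) q, (2 : ℝ) ^ p * a p) :
    (((2 : ℝ) ^ q) ^ 2)⁻¹ * Gq ≤ 2 * CB * A * ((2 : ℝ) ^ q)⁻¹ := by
  have hsum : ∑ p ∈ Icc (-1) q, (2 : ℝ) ^ p * a p ≤ 2 * 2 ^ q * A :=
    calc ∑ p ∈ Icc (-1) q, (2 : ℝ) ^ p * a p ≤ ∑ p ∈ Icc (-1) q, (2 : ℝ) ^ p * A :=
          sum_le_sum fun p hp => by gcongr; exact ha p hp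
      _ ≤ 2 * 2 ^ q * A := by
          rw [← sum_mul, ← zpow_one_add₀ two_ne_zero, add_comm]
          gcongr
          exact sum_Icc_two_zpow_le _ _
  calc (((2 : ℝ) ^ q) ^ 2)⁻¹ * Gq ≤ (((2 : ℝ) ^ q) ^ 2)⁻¹ * (CB * (2 * 2 ^ q * A)) := by
        gcongr
        exact hG.trans (by gcongr)
    _ = 2 * CB * A * ((2 : ℝ) ^ q)⁻¹ := by
        field_simp

lemma lambdaU_ne_top_of_goodU {L c ν σ : ℝ} {a G : ℤ → ℝ} {q : ℕ} (hq : GoodU L c ν σ a G q) :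
    LambdaU L c ν σ a G ≠ ⊤ :=
  ne_top_of_le_ne_top (ENNReal.pow_ne_top ENNReal.ofNat_ne_top) (sInf_le ⟨q, hq, rfl⟩)

theorem velocity_wavenumber_finite_general
    (L c ν σ δu CB : ℝ) (hL : 1 ≤ L) (hc : 0 < c) (hν : 0 < ν)
    (hσ : 0 ≤ σ) (hδu1 : 2 * σ + 1 < δu) (hCB : 0 < CB)
    (a G : ℤ → ℝ)
    (ha0 : ∀ q : ℤ, -1 ≤ q → 0 ≤ a q)
    (hBern : ∀ q : ℤ, -1 ≤ q →
      G q ≤ CB * ∑ p ∈ Finset.Icc (-1 : ℤ) q, (2:ℝ) ^ p * a p)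
    (hS : (∑' n : ℕ,
        ENNReal.ofReal
          (((2:ℝ) ^ ((n : ℤ) - 1)) ^ (-1 + δu) * a ((n : ℤ) - 1) ^ 2)) ≠ ⊤) :
    (∃ q : ℕ, GoodU L c ν σ a G q) ∧ LambdaU L c ν σ a G ≠ ⊤ := by
  obtain ⟨M, hM, hdecay⟩ := exists_le_mul_two_zpow_rpow_of_tsum_ne_top ha0 hS
  set β := (-1 + δu) / 2 with hβ
  have hσβ : σ ≤ β := by linarith
  have hbdd : ∀ p : ℤ, -1 ≤ p → a p ≤ M * 2 ^ β := fun p hp =>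
    calc a p ≤ M * ((2 : ℝ) ^ p) ^ (-β) := hdecay p hp
      _ ≤ M * ((2 : ℝ) ^ (-1 : ℤ)) ^ (-β) := by
        refine mul_le_mul_of_nonneg_left (Real.rpow_le_rpow_of_nonpos (by positivity) ?_ ?_) hM
        · exact zpow_le_zpow_right₀ one_le_two hp
        · linarith
      _ = M * 2 ^ β := by
        rw [zpow_neg_one, Real.inv_rpow zero_le_two, Real.rpow_neg zero_le_two, inv_inv]
  set C := max (L ^ σ * M) (2 * CB * (M * 2 ^ β))
  obtain ⟨q, hq⟩ := pow_unbounded_of_one_lt (C / (c * ν)) one_lt_two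
  have hCq : C * ((2 : ℝ) ^ (q : ℤ))⁻¹ < c * ν := by
    rw [zpow_natCast, ← div_eq_mul_inv, div_lt_iff₀ (by positivity), mul_comm]
    rwa [div_lt_iff₀ (by positivity)] at hq
  have hgood : GoodU L c ν σ a G q := by
    refine ⟨fun p hpq => ?_, ?_⟩
    · calc _ ≤ L ^ σ * M * ((2 : ℝ) ^ (q : ℤ))⁻¹ :=
            mul_rpow_mul_inv_mul_le (by linarith) (one_le_zpow₀ one_le_two (by omega))
              (one_le_zpow₀ one_le_two (by omega)) hσβ (by linarith) hM
              (by rw [← zpow_add₀ two_ne_zero, sub_add_cancel]; exact hdecay p (by omega))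
        _ ≤ C * ((2 : ℝ) ^ (q : ℤ))⁻¹ := by gcongr; exact le_max_left _ _
        _ < c * ν := hCq
    · calc _ ≤ 2 * CB * (M * 2 ^ β) * ((2 : ℝ) ^ (q : ℤ))⁻¹ :=
            inv_sq_mul_le_of_le_sum hCB.le (by positivity) (fun p hp => hbdd p (mem_Icc.1 hp).1)
              (hBern q (by omega))
        _ ≤ C * ((2 : ℝ) ^ (q : ℤ))⁻¹ := by gcongr; exact le_max_right _ _
        _ < c * ν := hCq
  exact ⟨⟨q, hgood⟩, lambdaU_ne_top_of_goodU hgood⟩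

/-- if `σ ≥ 0`, `2σ+1 < δ_u < 3`, and the weighted sum
`Σ_{q ≥ -1} λ_q^{-1+δ_u} a_q²` is finite, then some natural number `q` satisfies both
conditions in the definition of the velocity determining wavenumber; that is, `Λ_u < ∞`. -/
theorem velocity_wavenumber_finite
    (L c ν σ δu CB : ℝ) (hL : 1 ≤ L) (hc : 0 < c) (hν : 0 < ν)
    (hσ : 0 ≤ σ) (hδu1 : 2 * σ + 1 < δu) (hδu3 : δu < 3) (hCB : 0 < CB)
    (a G : ℤ → ℝ)
    (ha0 : ∀ q : ℤ, -1 ≤ q → 0 ≤ a q)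
    (hG0 : ∀ q : ℤ, -1 ≤ q → 0 ≤ G q)
    (hBern : ∀ q : ℤ, -1 ≤ q →
      G q ≤ CB * ∑ p ∈ Finset.Icc (-1 : ℤ) q, (2:ℝ) ^ p * a p)
    (hS : (∑' n : ℕ,
        ENNReal.ofReal
          (((2:ℝ) ^ ((n : ℤ) - 1)) ^ (-1 + δu) * a ((n : ℤ) - 1) ^ 2)) ≠ ⊤) :
    (∃ q : ℕ, GoodU L c ν σ a G q) ∧ LambdaU L c ν σ a G ≠ ⊤ :=
  velocity_wavenumber_finite_general L c ν σ δu CB hL hc hν hσ hδu1 hCB a G ha0 hBern hS
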